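/- arXiv:2401.11023 — 8 statements merged into one kernel-verified Lean document; each statement's English description precedes it below -/
import Mathlib

section
/- Let m be a positive integer and let U : Fin m → Matrix (Fin 3) (Fin 3) ℂ be a family of 3×3 special unitary matrices. Then there exist families of real angles α₁, α₂, …, α₉ : Fin m → ℝ such that blockdiag_j(U j) = D_{Z02}(α₁) · D_{Y02}(α₂) · D_{Z02}(α₃) · D_{Z01}(α₄) · D_{Y01}(α₅) · D_{Z01}(α₆) · D_{Z12}(α₇) · D_{Y12}(α₈) · D_{Z12}(α₉); that is, every block diagonal special unitary matrix with 3×3 special unitary diagonal blocks is a product of nine block diagonal qutrit-rotation matrices. -/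
open Matrix

/-- `e^{ι x}` for a real angle `x`. -/
noncomputable def eC (x : ℝ) : ℂ := Complex.exp (x * Complex.I)

noncomputable def RX01 (θ : ℝ) : Matrix (Fin 3) (Fin 3) ℂ :=
  !![(Real.cos θ : ℂ), (Real.sin θ : ℂ) * Complex.I, 0;
     (Real.sin θ : ℂ) * Complex.I, (Real.cos θ : ℂ), 0;
     0, 0, 1]

noncomputable def RX12 (θ : ℝ) : Matrix (Fin 3) (Fin 3) ℂ :=
  !![1, 0, 0;
     0, (Real.cos θ : ℂ), (Real.sin θ : ℂ) * Complex.I;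
     0, (Real.sin θ : ℂ) * Complex.I, (Real.cos θ : ℂ)]

noncomputable def RX02 (θ : ℝ) : Matrix (Fin 3) (Fin 3) ℂ :=
  !![(Real.cos θ : ℂ), 0, (Real.sin θ : ℂ) * Complex.I;
     0, 1, 0;
     (Real.sin θ : ℂ) * Complex.I, 0, (Real.cos θ : ℂ)]

noncomputable def RY01 (θ : ℝ) : Matrix (Fin 3) (Fin 3) ℂ :=
  !![(Real.cos θ : ℂ), (Real.sin θ : ℂ), 0;
     (-Real.sin θ : ℂ), (Real.cos θ : ℂ), 0;
     0, 0, 1]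

noncomputable def RY12 (θ : ℝ) : Matrix (Fin 3) (Fin 3) ℂ :=
  !![1, 0, 0;
     0, (Real.cos θ : ℂ), (Real.sin θ : ℂ);
     0, (-Real.sin θ : ℂ), (Real.cos θ : ℂ)]

noncomputable def RY02 (θ : ℝ) : Matrix (Fin 3) (Fin 3) ℂ :=
  !![(Real.cos θ : ℂ), 0, (Real.sin θ : ℂ);
     0, 1, 0;
     (-Real.sin θ : ℂ), 0, (Real.cos θ : ℂ)]

noncomputable def RZ01 (θ : ℝ) : Matrix (Fin 3) (Fin 3) ℂ :=
  !![eC θ, 0, 0; 0, eC (-θ), 0; 0, 0, 1]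

noncomputable def RZ12 (θ : ℝ) : Matrix (Fin 3) (Fin 3) ℂ :=
  !![1, 0, 0; 0, eC θ, 0; 0, 0, eC (-θ)]

noncomputable def RZ02 (θ : ℝ)  : Matrix (Fin 3) (Fin 3) ℂ :=
  !![eC θ, 0, 0; 0, 1, 0; 0, 0, eC (-θ)]

/-- Block diagonal matrix built from a one-qutrit gate family `R` applied to angles `α`. -/
noncomputable def D {m : ℕ} (R : ℝ → Matrix (Fin 3) (Fin 3) ℂ) (α : Fin m → ℝ) :
    Matrix (Fin 3 × Fin m) (Fin 3 × Fin m) ℂ :=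
  Matrix.blockDiagonal fun j => R (α j)

/-- Block diagonal matrix with three equal-size diagonal blocks. -/
noncomputable def diag3 {I : Type*} [DecidableEq I] (A B C : Matrix I I ℂ) :
    Matrix (I × Fin 3) (I × Fin 3) ℂ :=
  Matrix.blockDiagonal ![A, B, C]

/-!
Givens elimination in `SU(3)`. Multiplying `V` on the left by the inverse of an `SU(2)` matrix
acting on levels `0, 2` kills the entry `V 2 0`; a second one acting on levels `0, 1` turns the
first column into `e₀`. For a special unitary matrix `Xᴴ = X⁻¹` is the adjugate, so every entry
of `X` is the conjugate of a cofactor; with first column `e₀` this forces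
`X = 1 ⊕ [[z, w], [-w̄, z̄]]`. Finally every `[[z, w], [-w̄, z̄]]` with
`|z|² + |w|² = 1` is a `Z·Y·Z` product: write `z = cos b · e^{ι(a+c)}`, `w = sin b · e^{ι(a-c)}`.
-/

open ComplexConjugate

lemma eC_mul (x y : ℝ) : eC x * eC y = eC (x + y) := by
  rw [eC, eC, eC, ← Complex.exp_add]; congr 1; push_cast; ring

lemma conj_eC (x : ℝ) : conj (eC x) = eC (-x) := by
  rw [eC, eC, ← Complex.exp_conj]; congr 1; simp

lemma norm_mul_eC_arg (z : ℂ) : (‖z‖ : ℂ) * eC z.arg = z := by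
  simp [eC]

lemma conj_mul_add_conj_mul_eq_one {z w : ℂ} (h : ‖z‖ ^ 2 + ‖w‖ ^ 2 = 1) :
    conj z * z + conj w * w = 1 := by
  rw [Complex.conj_mul', Complex.conj_mul']; exact_mod_cast h

lemma exists_euler_angles {z w : ℂ} (h : ‖z‖ ^ 2 + ‖w‖ ^ 2 = 1) :
    ∃ a b c : ℝ, eC a * Real.cos b * eC c = z ∧ eC a * Real.sin b * eC (-c) = w := by
  have hw : ‖w‖ ≤ 1 := by nlinarith [norm_nonneg z, norm_nonneg w]
  have hsin : Real.sin (Real.arcsin ‖w‖) = ‖w‖ :=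
    Real.sin_arcsin (by linarith [norm_nonneg w]) hw
  have hcos : Real.cos (Real.arcsin ‖w‖) = ‖z‖ := by
    rw [Real.cos_arcsin, show 1 - ‖w‖ ^ 2 = ‖z‖ ^ 2 by linarith, Real.sqrt_sq (norm_nonneg z)]
  refine ⟨(z.arg + w.arg) / 2, Real.arcsin ‖w‖, (z.arg - w.arg) / 2, ?_, ?_⟩
  · rw [mul_right_comm, eC_mul, hcos, mul_comm]
    convert norm_mul_eC_arg z using 3
    ring
  · rw [mul_right_comm, eC_mul, hsin, mul_comm]
    convert norm_mul_eC_arg w using 3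
    ring

def givens02 (z w : ℂ) : Matrix (Fin 3) (Fin 3) ℂ :=
  !![z, 0, w; 0, 1, 0; -conj w, 0, conj z]

def givens01 (z w : ℂ) : Matrix (Fin 3) (Fin 3) ℂ :=
  !![z, w, 0; -conj w, conj z, 0; 0, 0, 1]

def givens12 (z w : ℂ) : Matrix (Fin 3) (Fin 3) ℂ :=
  !![1, 0, 0; 0, z, w; 0, -conj w, conj z]

lemma exists_RZ02_mul_RY02_mul_RZ02_eq_givens02 {z w : ℂ} (h : ‖z‖ ^ 2 + ‖w‖ ^ 2 = 1) :
    ∃ a b c : ℝ, RZ02 a * RY02 b * RZ02 c = givens02 z w := by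
  obtain ⟨a, b, c, rfl, rfl⟩ := exists_euler_angles h
  refine ⟨a, b, c, ?_⟩
  ext i j
  fin_cases i <;> fin_cases j <;>
    simp [RZ02, RY02, givens02, conj_eC, -Complex.ofReal_sin, -Complex.ofReal_cos]

lemma exists_RZ01_mul_RY01_mul_RZ01_eq_givens01 {z w : ℂ} (h : ‖z‖ ^ 2 + ‖w‖ ^ 2 = 1) :
    ∃ a b c : ℝ, RZ01 a * RY01 b * RZ01 c = givens01 z w := by
  obtain ⟨a, b, c, rfl, rfl⟩ := exists_euler_angles h
  refine ⟨a, b, c, ?_⟩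
  ext i j
  fin_cases i <;> fin_cases j <;>
    simp [RZ01, RY01, givens01, conj_eC, -Complex.ofReal_sin, -Complex.ofReal_cos]

lemma exists_RZ12_mul_RY12_mul_RZ12_eq_givens12 {z w : ℂ} (h : ‖z‖ ^ 2 + ‖w‖ ^ 2 = 1) :
    ∃ a b c : ℝ, RZ12 a * RY12 b * RZ12 c = givens12 z w := by
  obtain ⟨a, b, c, rfl, rfl⟩ := exists_euler_angles h
  refine ⟨a, b, c, ?_⟩
  ext i j
  fin_cases i <;> fin_cases j <;>
    simp [RZ12, RY12, givens12, conj_eC, -Complex.ofReal_sin, -Complex.ofReal_cos]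

lemma givens02_mem_specialUnitaryGroup {z w : ℂ} (h : ‖z‖ ^ 2 + ‖w‖ ^ 2 = 1) :
    givens02 z w ∈ specialUnitaryGroup (Fin 3) ℂ := by
  have h' := conj_mul_add_conj_mul_eq_one h
  refine ⟨mem_unitaryGroup_iff.mpr ?_, ?_⟩
  · ext i j
    fin_cases i <;> fin_cases j <;>
      simp [givens02, mul_apply, Fin.sum_univ_three, star_apply, one_apply, mul_comm] <;>
      linear_combination h'
  · simpa [givens02, det_fin_three, mul_comm] using h'

lemma givens01_mem_specialUnitaryGroup {z w : ℂ} (h : ‖z‖ ^ 2 + ‖w‖ ^ 2 = 1) :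
    givens01 z w ∈ specialUnitaryGroup (Fin 3) ℂ := by
  have h' := conj_mul_add_conj_mul_eq_one h
  refine ⟨mem_unitaryGroup_iff.mpr ?_, ?_⟩
  · ext i j
    fin_cases i <;> fin_cases j <;>
      simp [givens01, mul_apply, Fin.sum_univ_three, star_apply, one_apply, mul_comm] <;>
      linear_combination h'
  · simpa [givens01, det_fin_three, mul_comm] using h'

lemma exists_conj_mul_add_mul_eq_zero (u v : ℂ) :
    ∃ z w : ℂ, ‖z‖ ^ 2 + ‖w‖ ^ 2 = 1 ∧ conj w * u + z * v = 0 := by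
  by_cases hv : v = 0
  · exact ⟨1, 0, by simp, by simp [hv]⟩
  · set r := Real.sqrt (‖u‖ ^ 2 + ‖v‖ ^ 2)
    have hr : 0 < r := Real.sqrt_pos.mpr (by have := norm_pos_iff.mpr hv; positivity)
    have hr2 : r ^ 2 = ‖u‖ ^ 2 + ‖v‖ ^ 2 := Real.sq_sqrt (by positivity)
    refine ⟨-u / r, conj v / r, ?_, ?_⟩
    · simp only [norm_div, norm_neg, Complex.norm_conj, Complex.norm_real, Real.norm_eq_abs,
        abs_of_pos hr, div_pow, ← add_div, ← hr2]
      exact div_self (by positivity)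
    · have : (r : ℂ) ≠ 0 := by exact_mod_cast hr.ne'
      simp only [map_div₀, Complex.conj_conj, Complex.conj_ofReal]
      field_simp
      ring

lemma sum_norm_sq_apply_eq_one {𝕜 n : Type*} [RCLike 𝕜] [Fintype n] [DecidableEq n]
    {U : Matrix n n 𝕜} (hU : U ∈ unitaryGroup n 𝕜) (j : n) : ∑ i, ‖U i j‖ ^ 2 = 1 := by
  have h := congrFun (congrFun (mem_unitaryGroup_iff'.mp hU) j) j
  simp only [mul_apply, star_apply, RCLike.star_def, RCLike.conj_mul, one_apply_eq] at h
  exact_mod_cast h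

lemma star_eq_adjugate_of_mem_specialUnitaryGroup {α n : Type*} [CommRing α] [StarRing α]
    [Fintype n] [DecidableEq n] {A : Matrix n n α} (hA : A ∈ specialUnitaryGroup n α) :
    star A = adjugate A := by
  calc star A = star A * (A * adjugate A) := by
        rw [mul_adjugate, (mem_specialUnitaryGroup_iff.mp hA).2, one_smul, mul_one]
    _ = adjugate A := by rw [← mul_assoc, mem_unitaryGroup_iff'.mp hA.1, one_mul]

lemma star_mem_specialUnitaryGroup {α n : Type*} [CommRing α] [StarRing α]
    [Fintype n] [DecidableEq n] {A : Matrix n n α} (hA : A ∈ specialUnitaryGroup n α) :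
    star A ∈ specialUnitaryGroup n α :=
  (star (⟨A, hA⟩ : specialUnitaryGroup n α)).2

lemma exists_eq_givens12_of_mem_specialUnitaryGroup {X : Matrix (Fin 3) (Fin 3) ℂ}
    (hX : X ∈ specialUnitaryGroup (Fin 3) ℂ) (h00 : X 0 0 = 1) (h10 : X 1 0 = 0)
    (h20 : X 2 0 = 0) : ∃ z w : ℂ, ‖z‖ ^ 2 + ‖w‖ ^ 2 = 1 ∧ X = givens12 z w := by
  have cofactor : ∀ i j, star (X j i) = adjugate X i j := fun i j => by
    rw [← star_eq_adjugate_of_mem_specialUnitaryGroup hX, star_apply]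
  have h01 : X 0 1 = 0 := by simpa [adjugate_fin_three, h10, h20] using cofactor 1 0
  have h02 : X 0 2 = 0 := by simpa [adjugate_fin_three, h10, h20] using cofactor 2 0
  have h22 : X 2 2 = conj (X 1 1) := by
    simpa [adjugate_fin_three, h00, h20] using (cofactor 1 1).symm
  have h21 : X 2 1 = -conj (X 1 2) := by
    simpa [adjugate_fin_three, h00, h20] using congrArg Neg.neg (cofactor 2 1).symm
  refine ⟨X 1 1, X 1 2, ?_, ?_⟩
  · simpa [Fin.sum_univ_three, h01, h21] using sum_norm_sq_apply_eq_one hX.1 1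
  · ext i j
    fin_cases i <;> fin_cases j <;> simp [givens12, h00, h01, h02, h10, h20, h21, h22]

lemma exists_eq_givens02_mul_givens01_mul_givens12 {V : Matrix (Fin 3) (Fin 3) ℂ}
    (hV : V ∈ specialUnitaryGroup (Fin 3) ℂ) :
    ∃ z₁ w₁ z₂ w₂ z₃ w₃ : ℂ, ‖z₁‖ ^ 2 + ‖w₁‖ ^ 2 = 1 ∧ ‖z₂‖ ^ 2 + ‖w₂‖ ^ 2 = 1 ∧
      ‖z₃‖ ^ 2 + ‖w₃‖ ^ 2 = 1 ∧ V = givens02 z₁ w₁ * givens01 z₂ w₂ * givens12 z₃ w₃ := by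
  obtain ⟨z₁, w₁, h₁, hkill⟩ := exists_conj_mul_add_mul_eq_zero (V 0 0) (V 2 0)
  set A := givens02 z₁ w₁ with hA_def
  have hA := givens02_mem_specialUnitaryGroup h₁
  set W := star A * V with hW_def
  have hW : W ∈ specialUnitaryGroup (Fin 3) ℂ := mul_mem (star_mem_specialUnitaryGroup hA) hV
  have hW20 : W 2 0 = 0 := by
    simpa [hW_def, hA_def, givens02, mul_apply, Fin.sum_univ_three, star_apply] using hkill
  have hWcol : ‖W 0 0‖ ^ 2 + ‖W 1 0‖ ^ 2 = 1 := by
    simpa [Fin.sum_univ_three, hW20] using sum_norm_sq_apply_eq_one hW.1 0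
  have h₂ : ‖W 0 0‖ ^ 2 + ‖-conj (W 1 0)‖ ^ 2 = 1 := by simpa using hWcol
  set B := givens01 (W 0 0) (-conj (W 1 0)) with hB_def
  have hB := givens01_mem_specialUnitaryGroup h₂
  set X := star B * W with hX_def
  have hX : X ∈ specialUnitaryGroup (Fin 3) ℂ := mul_mem (star_mem_specialUnitaryGroup hB) hW
  have hX00 : X 0 0 = 1 := by
    rw [← conj_mul_add_conj_mul_eq_one hWcol]
    simp [hX_def, hB_def, givens01, mul_apply, Fin.sum_univ_three, star_apply, hW20]
  have hX10 : X 1 0 = 0 := by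
    simp [hX_def, hB_def, givens01, mul_apply, Fin.sum_univ_three, star_apply, hW20, mul_comm]
  have hX20 : X 2 0 = 0 := by
    simp [hX_def, hB_def, givens01, mul_apply, Fin.sum_univ_three, star_apply, hW20]
  obtain ⟨z₃, w₃, h₃, hX_eq⟩ := exists_eq_givens12_of_mem_specialUnitaryGroup hX hX00 hX10 hX20
  refine ⟨z₁, w₁, W 0 0, -conj (W 1 0), z₃, w₃, h₁, h₂, h₃, ?_⟩
  rw [← hX_eq, hX_def, hW_def, mul_assoc A B, ← mul_assoc B, mem_unitaryGroup_iff.mp hB.1,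
    one_mul, ← mul_assoc, mem_unitaryGroup_iff.mp hA.1, one_mul]

lemma exists_nine_angles_of_mem_specialUnitaryGroup {V : Matrix (Fin 3) (Fin 3) ℂ}
    (hV : V ∈ specialUnitaryGroup (Fin 3) ℂ) :
    ∃ a₁ a₂ a₃ a₄ a₅ a₆ a₇ a₈ a₉ : ℝ,
      V = RZ02 a₁ * RY02 a₂ * RZ02 a₃ * RZ01 a₄ * RY01 a₅ * RZ01 a₆ *
        RZ12 a₇ * RY12 a₈ * RZ12 a₉ := by
  obtain ⟨z₁, w₁, z₂, w₂, z₃, w₃, h₁, h₂, h₃, rfl⟩ :=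
    exists_eq_givens02_mul_givens01_mul_givens12 hV
  obtain ⟨a₁, a₂, a₃, e₁⟩ := exists_RZ02_mul_RY02_mul_RZ02_eq_givens02 h₁
  obtain ⟨a₄, a₅, a₆, e₂⟩ := exists_RZ01_mul_RY01_mul_RZ01_eq_givens01 h₂
  obtain ⟨a₇, a₈, a₉, e₃⟩ := exists_RZ12_mul_RY12_mul_RZ12_eq_givens12 h₃
  refine ⟨a₁, a₂, a₃, a₄, a₅, a₆, a₇, a₈, a₉, ?_⟩
  rw [← e₁, ← e₂, ← e₃]
  simp only [mul_assoc]

theorem stmt7_general (m : ℕ) (U : Fin m → Matrix (Fin 3) (Fin 3) ℂ)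
    (hU : ∀ j, U j ∈ Matrix.unitaryGroup (Fin 3) ℂ) (hdet : ∀ j, (U j).det = 1) :
    ∃ α₁ α₂ α₃ α₄ α₅ α₆ α₇ α₈ α₉ : Fin m → ℝ,
      Matrix.blockDiagonal U =
        D RZ02 α₁ * D RY02 α₂ * D RZ02 α₃ *
        D RZ01 α₄ * D RY01 α₅ * D RZ01 α₆ *
        D RZ12 α₇ * D RY12 α₈ * D RZ12 α₉ := by
  choose α₁ α₂ α₃ α₄ α₅ α₆ α₇ α₈ α₉ hα using
    fun j => exists_nine_angles_of_mem_specialUnitaryGroup ⟨hU j, hdet j⟩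
  refine ⟨α₁, α₂, α₃, α₄, α₅, α₆, α₇, α₈, α₉, ?_⟩
  simp only [D, ← blockDiagonal_mul]
  exact congrArg blockDiagonal (funext hα)

theorem stmt7 (m : ℕ) (hm : 0 < m) (U : Fin m → Matrix (Fin 3) (Fin 3) ℂ)
    (hU : ∀ j, U j ∈ Matrix.unitaryGroup (Fin 3) ℂ) (hdet : ∀ j, (U j).det = 1) :
    ∃ α₁ α₂ α₃ α₄ α₅ α₆ α₇ α₈ α₉ : Fin m → ℝ,
      Matrix.blockDiagonal U =
        D RZ02 α₁ * D RY02 α₂ * D RZ02 α₃ *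
        D RZ01 α₄ * D RY01 α₅ * D RZ01 α₆ *
        D RZ12 α₇ * D RY12 α₈ * D RZ12 α₉ :=
  stmt7_general m U hU hdet
end

section
/- Let m be a positive integer, let θ, φ, γ : Fin m → ℝ. Let E = blockdiag_j(X_{0,1}) (a 3m×3m matrix) and let I denote the 3m×3m identity. Then for a = Y01 and also for a = Z01: diag₃(D_a(θ), D_a(θ), D_a(θ)) · diag₃(I, E, I) · diag₃(D_a(φ), D_a(φ), D_a(φ)) · diag₃(I, E, I) · diag₃(I, I, E) · diag₃(D_a(γ), D_a(γ), D_a(γ)) · diag₃(I, I, E) = diag₃(D_a(θ+φ+γ), D_a(θ−φ+γ), D_a(θ+φ−γ)), where θ±φ±γ denotes the componentwise combination of the angle families. -/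
open Matrix

noncomputable def X01 : Matrix (Fin 3) (Fin 3) ℂ := !![0, 1, 0; 1, 0, 0; 0, 0, 1]
noncomputable def X12 : Matrix (Fin 3) (Fin 3) ℂ := !![1, 0, 0; 0, 0, 1; 0, 1, 0]
noncomputable def X02 : Matrix (Fin 3) (Fin 3) ℂ := !![0, 0, 1; 0, 1, 0; 1, 0, 0]
noncomputable def Xp1 : Matrix (Fin 3) (Fin 3) ℂ := !![0, 0, 1; 1, 0, 0; 0, 1, 0]
noncomputable def Xp2 : Matrix (Fin 3) (Fin 3) ℂ := !![0, 1, 0; 0, 0, 1; 1, 0, 0]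

lemma RY01_mul (a b : ℝ) : RY01 a * RY01 b = RY01 (a + b) := by
  ext i j
  fin_cases i <;> fin_cases j <;>
    simp [RY01, Matrix.mul_apply, Fin.sum_univ_three, Real.cos_add, Real.sin_add,
      Matrix.vecHead, Matrix.vecTail] <;>
    push_cast <;> ring

lemma X01_RY01 (a : ℝ) : X01 * RY01 a * X01 = RY01 (-a) := by
  ext i j
  fin_cases i <;> fin_cases j <;>
    simp [RY01, X01, Matrix.mul_apply, Fin.sum_univ_three, Matrix.vecHead, Matrix.vecTail]

lemma eC_add (a b : ℝ) : eC a * eC b = eC (a + b) := by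
  simp [eC, ← Complex.exp_add]; ring_nf

lemma RZ01_mul (a b : ℝ) : RZ01 a * RZ01 b = RZ01 (a + b) := by
  ext i j
  fin_cases i <;> fin_cases j <;>
    simp [RZ01, Matrix.mul_apply, Fin.sum_univ_three, eC_add, neg_add, add_comm,
      Matrix.vecHead, Matrix.vecTail]

lemma X01_RZ01 (a : ℝ) : X01 * RZ01 a * X01 = RZ01 (-a) := by
  ext i j
  fin_cases i <;> fin_cases j <;>
    simp [RZ01, X01, Matrix.mul_apply, Fin.sum_univ_three, Matrix.vecHead, Matrix.vecTail]

lemma fin3_mk_two (h : 2 < 3) : (⟨2, h⟩ : Fin 3) = 2 := rfl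

lemma stmt8_aux {m : ℕ} (R : ℝ → Matrix (Fin 3) (Fin 3) ℂ)
    (hmul : ∀ a b, R a * R b = R (a + b))
    (hconj : ∀ a, X01 * R a * X01 = R (-a))
    (θ φ γ : Fin m → ℝ) :
    ∀ (E I : Matrix (Fin 3 × Fin m) (Fin 3 × Fin m) ℂ),
    E = Matrix.blockDiagonal (fun _ : Fin m => X01) → I = 1 →
    diag3 (D R θ) (D R θ) (D R θ) * diag3 I E I *
      diag3 (D R φ) (D R φ) (D R φ) * diag3 I E I * diag3 I I E *
      diag3 (D R γ) (D R γ) (D R γ) * diag3 I I E =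
      diag3 (D R (fun j => θ j + φ j + γ j)) (D R (fun j => θ j - φ j + γ j))
        (D R (fun j => θ j + φ j - γ j)) := by
  rintro E I rfl rfl
  have hE : ∀ α : Fin m → ℝ,
      (Matrix.blockDiagonal fun _ : Fin m => X01) * (D R α *
        (Matrix.blockDiagonal fun _ : Fin m => X01)) = D R (fun j => -α j) := by
    intro α
    rw [← mul_assoc, D, ← Matrix.blockDiagonal_mul, ← Matrix.blockDiagonal_mul]
    exact congrArg _ (funext fun j => hconj (α j))
  have hD : ∀ α β : Fin m → ℝ, D R α * D R β = D R (fun j => α j + β j) := by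
    intro α β
    rw [D, D, ← Matrix.blockDiagonal_mul]
    exact congrArg _ (funext fun j => hmul (α j) (β j))
  set E2 : Matrix (Fin 3 × Fin m) (Fin 3 × Fin m) ℂ :=
    Matrix.blockDiagonal fun _ : Fin m => X01 with hE2def
  have hE2 : ∀ (α : Fin m → ℝ) (M : Matrix (Fin 3 × Fin m) (Fin 3 × Fin m) ℂ),
      E2 * (D R α * (E2 * M)) = D R (fun j => -α j) * M := by
    intro α M
    rw [← mul_assoc, ← mul_assoc, mul_assoc E2, hE α]
  have hD2 : ∀ (α β : Fin m → ℝ) (M : Matrix (Fin 3 × Fin m) (Fin 3 × Fin m) ℂ),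
      D R α * (D R β * M) = D R (fun j => α j + β j) * M := by
    intro α β M
    rw [← mul_assoc, hD]
  have key : ∀ (M N : Fin 3 → Matrix (Fin 3 × Fin m) (Fin 3 × Fin m) ℂ),
      Matrix.blockDiagonal M * Matrix.blockDiagonal N
        = Matrix.blockDiagonal (fun k => M k * N k) :=
    fun M N => (Matrix.blockDiagonal_mul M N).symm
  simp only [diag3, key]
  refine congrArg _ (funext fun k => ?_)
  fin_cases k <;>
    [skip; skip; skip] <;>
    simp only [Fin.isValue, Matrix.cons_val_zero, Matrix.cons_val_one, Matrix.head_cons,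
      Matrix.cons_val_two, Matrix.tail_cons, Fin.mk_zero, Fin.mk_one, fin3_mk_two,
      one_mul, mul_one, mul_assoc, hE, hE2, hD2, hD] <;>
    exact congrArg (D R) (funext fun j => by ring)

theorem stmt8 (m : ℕ) (hm : 0 < m) (θ φ γ : Fin m → ℝ) :
    let E : Matrix (Fin 3 × Fin m) (Fin 3 × Fin m) ℂ :=
      Matrix.blockDiagonal fun _ : Fin m => X01
    let I : Matrix (Fin 3 × Fin m) (Fin 3 × Fin m) ℂ := 1
    diag3 (D RY01 θ) (D RY01 θ) (D RY01 θ) * diag3 I E I *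
      diag3 (D RY01 φ) (D RY01 φ) (D RY01 φ) * diag3 I E I * diag3 I I E *
      diag3 (D RY01 γ) (D RY01 γ) (D RY01 γ) * diag3 I I E =
      diag3 (D RY01 (fun j => θ j + φ j + γ j)) (D RY01 (fun j => θ j - φ j + γ j))
        (D RY01 (fun j => θ j + φ j - γ j)) ∧
    diag3 (D RZ01 θ) (D RZ01 θ) (D RZ01 θ) * diag3 I E I *
      diag3 (D RZ01 φ) (D RZ01 φ) (D RZ01 φ) * diag3 I E I * diag3 I I E *
      diag3 (D RZ01 γ) (D RZ01 γ) (D RZ01 γ) * diag3 I I E =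
      diag3 (D RZ01 (fun j => θ j + φ j + γ j)) (D RZ01 (fun j => θ j - φ j + γ j))
        (D RZ01 (fun j => θ j + φ j - γ j)) := by
  intro E I
  exact ⟨stmt8_aux RY01 RY01_mul X01_RY01 θ φ γ E I rfl rfl,
         stmt8_aux RZ01 RZ01_mul X01_RZ01 θ φ γ E I rfl rfl⟩
end

section
/- Let m be a positive integer and θ, φ, γ : Fin m → ℝ. Let E = blockdiag_j(R_{Z12}(π)) (a 3m×3m matrix, where R_{Z12}(π) = diag(1,−1,−1)) and let I denote the 3m×3m identity. Then with a = X02: diag₃(D_a(θ), D_a(θ), D_a(θ)) · diag₃(I, E, I) · diag₃(D_a(φ), D_a(φ), D_a(φ)) · diag₃(I, E, I) · diag₃(I, I, E) · diag₃(D_a(γ), D_a(γ), D_a(γ)) · diag₃(I, I, E) = diag₃(D_a(θ+φ+γ), D_a(θ−φ+γ), D_a(θ+φ−γ)), where θ±φ±γ denotes the componentwise combination of the angle families. -/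
open Matrix

/-! Every factor is block diagonal, so the identity holds block by block, where it reduces to two
facts about a single qutrit: `RX02` is a one-parameter group, and conjugating by
`RZ12 π = diag(1, -1, -1)` negates the `0`–`2` off-diagonal entries, i.e. reverses the angle. -/

lemma RX02_add (a b : ℝ) : RX02 (a + b) = RX02 a * RX02 b := by
  ext i j
  fin_cases i <;> fin_cases j <;>
    simp [RX02, Matrix.mul_apply, Fin.sum_univ_three, Real.cos_add, Real.sin_add] <;>
    ring_nf <;> simp [Complex.I_sq] <;> ring

lemma RZ12_pi : RZ12 Real.pi = !![1, 0, 0; 0, -1, 0; 0, 0, -1] := by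
  simp [RZ12, eC, Complex.exp_pi_mul_I]

lemma mul_RZ12_pi_mul_RX02_mul_RZ12_pi (X : Matrix (Fin 3) (Fin 3) ℂ) (a : ℝ) :
    X * RZ12 Real.pi * RX02 a * RZ12 Real.pi = X * RX02 (-a) := by
  have hconj : RZ12 Real.pi * RX02 a * RZ12 Real.pi = RX02 (-a) := by
    rw [RZ12_pi]
    ext i j
    fin_cases i <;> fin_cases j <;>
      simp [RX02, Matrix.mul_apply, Fin.sum_univ_three, Real.sin_neg, Real.cos_neg]
  simp only [← hconj, mul_assoc]

lemma diag3_mul_diag3 {I : Type*} [Fintype I] [DecidableEq I] (A B C A' B' C' : Matrix I I ℂ) :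
    diag3 A B C * diag3 A' B' C' = diag3 (A * A') (B * B') (C * C') := by
  rw [diag3, diag3, ← blockDiagonal_mul]
  congr 1
  ext k : 1
  fin_cases k <;> rfl

theorem stmt11_general (m : ℕ) (θ φ γ : Fin m → ℝ) :
    let E : Matrix (Fin 3 × Fin m) (Fin 3 × Fin m) ℂ :=
      Matrix.blockDiagonal fun _ : Fin m => RZ12 Real.pi
    let I : Matrix (Fin 3 × Fin m) (Fin 3 × Fin m) ℂ := 1
    diag3 (D RX02 θ) (D RX02 θ) (D RX02 θ) * diag3 I E I *
      diag3 (D RX02 φ) (D RX02 φ) (D RX02 φ) * diag3 I E I * diag3 I I E *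
      diag3 (D RX02 γ) (D RX02 γ) (D RX02 γ) * diag3 I I E =
      diag3 (D RX02 (fun j => θ j + φ j + γ j)) (D RX02 (fun j => θ j - φ j + γ j))
        (D RX02 (fun j => θ j + φ j - γ j)) := by
  intro E I
  simp only [I, diag3_mul_diag3, mul_one]
  congr 1 <;> simp only [D, E, ← blockDiagonal_mul] <;> congr 1 <;> funext j
  · rw [RX02_add, RX02_add]
  · rw [mul_RZ12_pi_mul_RX02_mul_RZ12_pi, sub_eq_add_neg, RX02_add, RX02_add]
  · rw [mul_RZ12_pi_mul_RX02_mul_RZ12_pi, sub_eq_add_neg, RX02_add, RX02_add]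

theorem stmt11 (m : ℕ) (hm : 0 < m) (θ φ γ : Fin m → ℝ) :
    let E : Matrix (Fin 3 × Fin m) (Fin 3 × Fin m) ℂ :=
      Matrix.blockDiagonal fun _ : Fin m => RZ12 Real.pi
    let I : Matrix (Fin 3 × Fin m) (Fin 3 × Fin m) ℂ := 1
    diag3 (D RX02 θ) (D RX02 θ) (D RX02 θ) * diag3 I E I *
      diag3 (D RX02 φ) (D RX02 φ) (D RX02 φ) * diag3 I E I * diag3 I I E *
      diag3 (D RX02 γ) (D RX02 γ) (D RX02 γ) * diag3 I I E =
      diag3 (D RX02 (fun j => θ j + φ j + γ j)) (D RX02 (fun j => θ j - φ j + γ j))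
        (D RX02 (fun j => θ j + φ j - γ j)) :=
  stmt11_general m θ φ γ
end

section
/- Let m be a positive integer and θ, φ, γ : Fin m → ℝ. Let E = blockdiag_j(R_{Z12}(π)) (a 3m×3m matrix, where R_{Z12}(π) = diag(1,−1,−1)) and let I denote the 3m×3m identity. Then with a = X01: diag₃(D_a(θ), D_a(θ), D_a(θ)) · diag₃(I, E, I) · diag₃(D_a(φ), D_a(φ), D_a(φ)) · diag₃(I, E, I) · diag₃(I, I, E) · diag₃(D_a(γ), D_a(γ), D_a(γ)) · diag₃(I, I, E) = diag₃(D_a(θ+φ+γ), D_a(θ−φ+γ), D_a(θ+φ−γ)), where θ±φ±γ denotes the componentwise combination of the angle families. -/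
open Matrix

lemma RX01_mul (a b : ℝ) : RX01 a * RX01 b = RX01 (a + b) := by
  ext i j
  fin_cases i <;> fin_cases j <;>
    simp [RX01, Matrix.mul_apply, Fin.sum_univ_three, Real.cos_add, Real.sin_add] <;> ring_nf <;>
    simp [Complex.I_sq] <;> ring

lemma E_conj (b : ℝ) : RZ12 Real.pi * RX01 b * RZ12 Real.pi = RX01 (-b) := by
  have h : eC Real.pi = -1 := by
    simp [eC, Complex.exp_pi_mul_I]
  have h2 : eC (-Real.pi) = -1 := by
    rw [eC, Complex.ofReal_neg, neg_mul, Complex.exp_neg, Complex.exp_pi_mul_I]; norm_num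
  ext i j
  fin_cases i <;> fin_cases j <;>
    simp [RX01, RZ12, h, h2, Matrix.mul_apply, Fin.sum_univ_three, Matrix.vecHead,
      Matrix.vecTail]

lemma diag3_mul {I : Type*} [DecidableEq I] [Fintype I] (A B C A' B' C' : Matrix I I ℂ) :
    diag3 A B C * diag3 A' B' C' = diag3 (A * A') (B * B') (C * C') := by
  rw [diag3, diag3, ← Matrix.blockDiagonal_mul]
  have h : (fun k => ![A, B, C] k * ![A', B', C'] k) = ![A * A', B * B', C * C'] := by
    funext i; fin_cases i <;> simp
  rw [h, diag3]

lemma D_mul {m : ℕ} (α β : Fin m → ℝ) :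
    D RX01 α * D RX01 β = D RX01 (fun j => α j + β j) := by
  rw [D, D, ← Matrix.blockDiagonal_mul, D]
  exact congrArg _ (funext fun j => RX01_mul _ _)

lemma ED_conj {m : ℕ} (β : Fin m → ℝ) :
    (Matrix.blockDiagonal fun _ : Fin m => RZ12 Real.pi) * D RX01 β *
      (Matrix.blockDiagonal fun _ : Fin m => RZ12 Real.pi) = D RX01 (fun j => -β j) := by
  rw [D, D, ← Matrix.blockDiagonal_mul, ← Matrix.blockDiagonal_mul]
  exact congrArg _ (funext fun j => E_conj _)

theorem stmt12 (m : ℕ) (hm : 0 < m) (θ φ γ : Fin m → ℝ) :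
    let E : Matrix (Fin 3 × Fin m) (Fin 3 × Fin m) ℂ :=
      Matrix.blockDiagonal fun _ : Fin m => RZ12 Real.pi
    let I : Matrix (Fin 3 × Fin m) (Fin 3 × Fin m) ℂ := 1
    diag3 (D RX01 θ) (D RX01 θ) (D RX01 θ) * diag3 I E I *
      diag3 (D RX01 φ) (D RX01 φ) (D RX01 φ) * diag3 I E I * diag3 I I E *
      diag3 (D RX01 γ) (D RX01 γ) (D RX01 γ) * diag3 I I E =
      diag3 (D RX01 (fun j => θ j + φ j + γ j)) (D RX01 (fun j => θ j - φ j + γ j))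
        (D RX01 (fun j => θ j + φ j - γ j)) := by
  intro E I
  have hE : ∀ β : Fin m → ℝ, E * D RX01 β * E = D RX01 (fun j => -β j) := ED_conj
  have h1 : D RX01 θ * I * D RX01 φ * I * I * D RX01 γ * I
      = D RX01 (fun j => θ j + φ j + γ j) := by
    simp only [mul_one, I, D_mul]
  have h2 : D RX01 θ * E * D RX01 φ * E * I * D RX01 γ * I
      = D RX01 (fun j => θ j - φ j + γ j) := by
    simp only [mul_one, I]
    rw [mul_assoc (D RX01 θ) E (D RX01 φ), mul_assoc (D RX01 θ) (E * D RX01 φ) E,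
      hE φ, D_mul, D_mul]
    exact congrArg _ (funext fun j => by ring)
  have h3 : D RX01 θ * I * D RX01 φ * I * E * D RX01 γ * E
      = D RX01 (fun j => θ j + φ j - γ j) := by
    simp only [mul_one, I]
    rw [mul_assoc (D RX01 θ * D RX01 φ) E (D RX01 γ),
      mul_assoc (D RX01 θ * D RX01 φ) (E * D RX01 γ) E,
      hE γ, D_mul, D_mul]
    exact congrArg _ (funext fun j => by ring)
  rw [diag3_mul, diag3_mul, diag3_mul, diag3_mul, diag3_mul, diag3_mul, h1, h2, h3]
end

section
/- Let m be a positive integer and θ, φ, γ : Fin m → ℝ. Let E = blockdiag_j(R_{Z02}(π)) (a 3m×3m matrix, where R_{Z02}(π) = diag(−1,1,−1)) and let I denote the 3m×3m identity. Then with a = X12: diag₃(D_a(θ), D_a(θ), D_a(θ)) · diag₃(I, E, I) · diag₃(D_a(φ), D_a(φ), D_a(φ)) · diag₃(I, E, I) · diag₃(I, I, E) · diag₃(D_a(γ), D_a(γ), D_a(γ)) · diag₃(I, I, E) = diag₃(D_a(θ+φ+γ), D_a(θ−φ+γ), D_a(θ+φ−γ)), where θ±φ±γ denotes the componentwise combination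 of the angle families. -/
open Matrix

lemma eC_pi : eC Real.pi = -1 := by
  unfold eC; exact Complex.exp_pi_mul_I

lemma eC_neg_pi : eC (-Real.pi) = -1 := by
  unfold eC
  rw [Complex.ofReal_neg, neg_mul, Complex.exp_neg, Complex.exp_pi_mul_I]
  norm_num

lemma Zpi : RZ02 Real.pi = !![-1,0,0;0,1,0;0,0,-1] := by
  unfold RZ02; rw [eC_pi, eC_neg_pi]

lemma mulI (x y : ℂ) : (x*Complex.I)*(y*Complex.I) = -(x*y) := by
  rw [mul_mul_mul_comm, Complex.I_mul_I]; ring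

lemma XX (a b : ℝ) : RX12 a * RX12 b = RX12 (a+b) := by
  ext i j
  fin_cases i <;> fin_cases j <;>
    simp [RX12, Matrix.mul_apply, Fin.sum_univ_three, mulI, Matrix.vecHead, Matrix.vecTail,
      Real.cos_add, Real.sin_add] <;>
    push_cast <;> ring

lemma ZZ : RZ02 Real.pi * RZ02 Real.pi = 1 := by
  rw [Zpi]
  ext i j
  fin_cases i <;> fin_cases j <;>
    simp [Matrix.mul_apply, Fin.sum_univ_three, Matrix.one_apply, Matrix.vecHead, Matrix.vecTail]

lemma ZX (b : ℝ) : RZ02 Real.pi * RX12 b = RX12 (-b) * RZ02 Real.pi := by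
  rw [Zpi]
  ext i j
  fin_cases i <;> fin_cases j <;>
    simp [RX12, Zpi, Matrix.mul_apply, Fin.sum_univ_three, Matrix.vecHead, Matrix.vecTail] <;>
    push_cast <;> ring

lemma key1 (a b c : ℝ) : RX12 a * RX12 b * RX12 c = RX12 (a+b+c) := by
  rw [XX, XX]

lemma key2 (a b c : ℝ) :
    RX12 a * RZ02 Real.pi * RX12 b * RZ02 Real.pi * RX12 c = RX12 (a-b+c) := by
  rw [mul_assoc (RX12 a), ZX, ← mul_assoc, XX, mul_assoc, mul_assoc, ← mul_assoc (RZ02 Real.pi),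
    ZZ, one_mul, XX]
  ring_nf

lemma key3 (a b c : ℝ) :
    RX12 a * RX12 b * RZ02 Real.pi * RX12 c * RZ02 Real.pi = RX12 (a+b-c) := by
  rw [XX, mul_assoc (RX12 (a+b)), ZX, ← mul_assoc, XX, mul_assoc, ZZ, mul_one]
  ring_nf

theorem stmt13 (m : ℕ) (hm : 0 < m) (θ φ γ : Fin m → ℝ) :
    let E : Matrix (Fin 3 × Fin m) (Fin 3 × Fin m) ℂ :=
      Matrix.blockDiagonal fun _ : Fin m => RZ02 Real.pi
    let I : Matrix (Fin 3 × Fin m) (Fin 3 × Fin m) ℂ := 1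
    diag3 (D RX12 θ) (D RX12 θ) (D RX12 θ) * diag3 I E I *
      diag3 (D RX12 φ) (D RX12 φ) (D RX12 φ) * diag3 I E I * diag3 I I E *
      diag3 (D RX12 γ) (D RX12 γ) (D RX12 γ) * diag3 I I E =
      diag3 (D RX12 (fun j => θ j + φ j + γ j)) (D RX12 (fun j => θ j - φ j + γ j))
        (D RX12 (fun j => θ j + φ j - γ j)) := by
  intro E I
  simp only [diag3, ← Matrix.blockDiagonal_mul]
  refine congrArg Matrix.blockDiagonal (funext fun i => ?_)
  fin_cases i <;>
    simp only [Fin.zero_eta, Fin.mk_one, Fin.reduceFinMk, Matrix.cons_val_zero,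
      Matrix.cons_val_one, Matrix.head_cons, Matrix.cons_val_two, Matrix.tail_cons,
      mul_one, one_mul] <;>
    simp only [D, E, I, mul_one, one_mul, ← Matrix.blockDiagonal_mul]
  · exact congrArg Matrix.blockDiagonal (funext fun j => key1 (θ j) (φ j) (γ j))
  · exact congrArg Matrix.blockDiagonal (funext fun j => key2 (θ j) (φ j) (γ j))
  · exact congrArg Matrix.blockDiagonal (funext fun j => key3 (θ j) (φ j) (γ j))
end

section
/- Let m be a positive integer and θ, φ, ψ : Fin m → ℝ. Then blockdiag_j(M₁(−θ_j, −φ_j, ψ_j)) = D_{Z02}(λ⁺) · D_{Y02}(−θ) · D_{Z02}(λ⁻), where λ⁺_j = (−φ_j + ψ_j)/2, λ⁻_j = (−φ_j − ψ_j)/2, and −θ denotes the componentwise negation of θ. -/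
open Matrix

noncomputable def M1 (θ φ ψ : ℝ) : Matrix (Fin 3) (Fin 3) ℂ :=
  !![(Real.cos θ : ℂ) * eC φ, 0, (Real.sin θ : ℂ) * eC ψ;
     0, 1, 0;
     (-Real.sin θ : ℂ) * eC (-ψ), 0, (Real.cos θ : ℂ) * eC (-φ)]

noncomputable def M2 (θ φ ψ : ℝ) : Matrix (Fin 3) (Fin 3) ℂ :=
  !![(Real.cos θ : ℂ) * eC φ, (Real.sin θ : ℂ) * eC ψ, 0;
     (-Real.sin θ : ℂ) * eC (-ψ), (Real.cos θ : ℂ) * eC (-φ), 0;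
     0, 0, 1]

noncomputable def M3 (θ φ ψ : ℝ) : Matrix (Fin 3) (Fin 3) ℂ :=
  !![1, 0, 0;
     0, (Real.cos θ : ℂ) * eC φ, (Real.sin θ : ℂ) * eC ψ;
     0, (-Real.sin θ : ℂ) * eC (-ψ), (Real.cos θ : ℂ) * eC (-φ)]

lemma block14 (t f p : ℝ) :
    M1 (-t) (-f) p =
      RZ02 ((-f + p) / 2) * RY02 (-t) * RZ02 ((-f - p) / 2) := by
  have key : ∀ a b : ℝ, eC a * eC b = eC (a + b) := by
    intro a b
    simp [eC, ← Complex.exp_add, Complex.ofReal_add]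
    ring_nf
  ext i k
  fin_cases i <;> fin_cases k <;>
    simp [M1, RZ02, RY02, Matrix.mul_apply, Fin.sum_univ_three, key, vecHead, vecTail] <;>
    rw [mul_right_comm, key] <;> norm_num <;> ring

theorem stmt14 (m : ℕ) (hm : 0 < m) (θ φ ψ : Fin m → ℝ) :
    Matrix.blockDiagonal (fun j => M1 (-θ j) (-φ j) (ψ j)) =
      D RZ02 (fun j => (-φ j + ψ j) / 2) * D RY02 (fun j => -θ j) *
        D RZ02 (fun j => (-φ j - ψ j) / 2) := by
  simp only [D, ← Matrix.blockDiagonal_mul]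
  apply congrArg
  funext j
  exact block14 (θ j) (φ j) (ψ j)
end

section
/- Let m be a positive integer and θ, φ, ψ : Fin m → ℝ. Then blockdiag_j(M₃(−θ_j, −φ_j, ψ_j)) = D_{Z12}(λ⁺) · D_{Y12}(−θ) · D_{Z12}(λ⁻), where λ⁺_j = (−φ_j + ψ_j)/2, λ⁻_j = (−φ_j − ψ_j)/2, and −θ denotes the componentwise negation of θ. -/
open Matrix

lemma block16 (t f p : ℝ) :
    M3 (-t) (-f) (p) = RZ12 ((-f + p)/2) * RY12 (-t) * RZ12 ((-f - p)/2) := by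
  have key : ∀ a b : ℝ, eC a * eC b = eC (a + b) := fun a b => by
    simp [eC, ← Complex.exp_add]; ring_nf
  have h1 : (-f + p)/2 + (-f - p)/2 = -f := by ring
  have h2 : (-f + p)/2 + -((-f - p)/2) = p := by ring
  have h3 : -((-f + p)/2) + (-f - p)/2 = -p := by ring
  have h4 : -((-f + p)/2) + -((-f - p)/2) = f := by ring
  have h1' : (-f - p)/2 + (-f + p)/2 = -f := by ring
  have h2' : -((-f - p)/2) + (-f + p)/2 = p := by ring
  have h3' : (-f - p)/2 + -((-f + p)/2) = -p := by ring
  have h4' : -((-f - p)/2) + -((-f + p)/2) = f := by ring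
  ext i j
  fin_cases i <;> fin_cases j <;>
    simp [M3, RZ12, RY12, Matrix.mul_apply, Fin.sum_univ_three, Matrix.vecHead,
      Matrix.vecTail, mul_assoc, mul_comm, mul_left_comm, key,
      h1, h2, h3, h4, h1', h2', h3', h4']

theorem stmt16 (m : ℕ) (hm : 0 < m) (θ φ ψ : Fin m → ℝ) :
    Matrix.blockDiagonal (fun j => M3 (-θ j) (-φ j) (ψ j)) =
      D RZ12 (fun j => (-φ j + ψ j) / 2) * D RY12 (fun j => -θ j) *
        D RZ12 (fun j => (-φ j - ψ j) / 2) := by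
  have : (fun j => M3 (-θ j) (-φ j) (ψ j)) = fun j =>
      RZ12 ((-φ j + ψ j)/2) * RY12 (-θ j) * RZ12 ((-φ j - ψ j)/2) :=
    funext fun j => block16 (θ j) (φ j) (ψ j)
  rw [this]
  simp [D, ← Matrix.blockDiagonal_mul]
end

section
/- Let n ≥ 2 and m = 3^{n−1}. Let T₂ be the 3m×3m matrix blockdiag_j(A_j) with A_j = I₃ for j < m−1 and A_{m−1} = X_{+2} (the n-qutrit gate applying X_{+2} to the last qutrit controlled on all other qutrits having value 2). Then T₂ = D_{Y02}(α) · D_{Z12}(β) · D_{Y12}(α) · D_{Z12}(−β), where α, β : Fin m → ℝ are given by α_j = 0 and β_j = 0 for j < m−1, α_{m−1} = −π/2 and β_{m−1} = π/2, and −β is the componentwise negation. In particular, X_{+2} = R_{Y02}(−π/2) · R_{Z12}(π/2) · R_{Y12}(−π/2) · R_{Z12}(−π/2). -/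
open Matrix

lemma eC_zero : eC 0 = 1 := by simp [eC]

lemma eC_pi_div_two : eC (Real.pi / 2) = Complex.I := by
  simp [eC, Complex.exp_mul_I]

lemma eC_neg_pi_div_two : eC (-(Real.pi / 2)) = -Complex.I := by
  have : ((-(Real.pi / 2) : ℝ) : ℂ) * Complex.I = -(((Real.pi / 2 : ℝ) : ℂ) * Complex.I) := by
    push_cast; ring
  rw [eC, this, Complex.exp_neg, ← eC, eC_pi_div_two, Complex.inv_I]

lemma key : Xp2 = RY02 (-(Real.pi / 2)) * RZ12 (Real.pi / 2) * RY12 (-(Real.pi / 2)) *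
    RZ12 (-(Real.pi / 2)) := by
  have h1 : eC (Real.pi / 2) = Complex.I := eC_pi_div_two
  have h2 : eC (-(Real.pi / 2)) = -Complex.I := eC_neg_pi_div_two
  ext i j
  fin_cases i <;> fin_cases j <;>
    simp [Xp2, RY02, RZ12, RY12, Matrix.mul_apply, Fin.sum_univ_succ, h1, h2,
      Matrix.vecHead, Matrix.vecTail, Complex.ext_iff]

lemma id1 : RY02 0 = 1 := by
  ext i j; fin_cases i <;> fin_cases j <;> simp [RY02, Matrix.vecHead, Matrix.vecTail, Matrix.one_apply]

lemma id2 : RZ12 0 = 1 := by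
  ext i j; fin_cases i <;> fin_cases j <;> simp [RZ12, Matrix.vecHead, Matrix.vecTail, eC_zero, Matrix.one_apply]

lemma id3 : RY12 0 = 1 := by
  ext i j; fin_cases i <;> fin_cases j <;> simp [RY12, Matrix.vecHead, Matrix.vecTail, Matrix.one_apply]

theorem stmt19 (n : ℕ) (hn : 2 ≤ n) :
    (Matrix.blockDiagonal (fun j : Fin (3 ^ (n - 1)) =>
        if (j : ℕ) = 3 ^ (n - 1) - 1 then Xp2 else (1 : Matrix (Fin 3) (Fin 3) ℂ)) =
      D RY02 (fun j => if (j : ℕ) = 3 ^ (n - 1) - 1 then -(Real.pi / 2) else 0) *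
        D RZ12 (fun j => if (j : ℕ) = 3 ^ (n - 1) - 1 then Real.pi / 2 else 0) *
        D RY12 (fun j => if (j : ℕ) = 3 ^ (n - 1) - 1 then -(Real.pi / 2) else 0) *
        D RZ12 (fun j => -(if (j : ℕ) = 3 ^ (n - 1) - 1 then Real.pi / 2 else 0))) ∧
    Xp2 = RY02 (-(Real.pi / 2)) * RZ12 (Real.pi / 2) * RY12 (-(Real.pi / 2)) *
        RZ12 (-(Real.pi / 2)) := by
  refine ⟨?_, key⟩
  have hblk : (fun j : Fin (3 ^ (n - 1)) =>
      if (j : ℕ) = 3 ^ (n - 1) - 1 then Xp2 else (1 : Matrix (Fin 3) (Fin 3) ℂ))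
      = fun j : Fin (3 ^ (n - 1)) => RY02 (if (j : ℕ) = 3 ^ (n - 1) - 1 then -(Real.pi / 2) else 0) *
        RZ12 (if (j : ℕ) = 3 ^ (n - 1) - 1 then Real.pi / 2 else 0) *
        RY12 (if (j : ℕ) = 3 ^ (n - 1) - 1 then -(Real.pi / 2) else 0) *
        RZ12 (-(if (j : ℕ) = 3 ^ (n - 1) - 1 then Real.pi / 2 else 0)) := by
    funext j
    by_cases h : (j : ℕ) = 3 ^ (n - 1) - 1 <;>
      simp [h, id1, id2, id3, ← key]
  simp only [D, hblk, Matrix.blockDiagonal_mul]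
end
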